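/- Let D ⊆ ℝ^n be nonempty closed, P and Q closed axis-parallel cubes with 10 δ_P ≤ dist(P,D) ≤ 22 δ_P and 10 δ_Q ≤ dist(Q,D) ≤ 22 δ_Q. Let x_P ∈ D, c_P ∈ P with |x_P − c_P| = dist(P,D), and let x ∈ ℝ^n with |x − c_P| ≤ (7/10) dist(P,D). If x' ∈ Q ∩ [x, x_P), then 10 δ_Q ≤ |x' − x_P| ≤ 131 δ_Q. -/
import Mathlib


open MeasureTheory Metric Set

abbrev En (n : ℕ) := EuclideanSpace ℝ (Fin n)

/-- `Q` is a closed axis-parallel cube. -/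
def IsCube {n : ℕ} (Q : Set (En n)) : Prop :=
  ∃ (a : En n) (t : ℝ), 0 < t ∧ Q = {x | ∀ i, |x i - a i| ≤ t}

/-- The distance between two sets, `dist(A,B) = inf {|x−y| : x ∈ A, y ∈ B}`. -/
noncomputable def setDist {n : ℕ} (A B : Set (En n)) : ℝ :=
  sInf (Set.image2 dist A B)

lemma isCube_bounded {n : ℕ} {Q : Set (En n)} (hQ : IsCube Q) :
    Bornology.IsBounded Q := by
  obtain ⟨a, r, hr, rfl⟩ := hQ
  rw [Metric.isBounded_iff]
  refine ⟨Real.sqrt (n * (2*r)^2), fun z hz w hw => ?_⟩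
  rw [EuclideanSpace.dist_eq]
  apply Real.sqrt_le_sqrt
  calc ∑ i, dist (z i) (w i) ^ 2 ≤ ∑ _i : Fin n, (2*r)^2 := by
        apply Finset.sum_le_sum
        intro i _
        have h1 := hz i
        have h2 := hw i
        have : dist (z i) (w i) ≤ 2 * r := by
          rw [Real.dist_eq]
          have : z i - w i = (z i - a i) - (w i - a i) := by ring
          rw [this]
          calc |z i - a i - (w i - a i)| ≤ |z i - a i| + |w i - a i| := abs_sub _ _
            _ ≤ 2 * r := by linarith
        nlinarith [dist_nonneg (x := z i) (y := w i)]
    _ = n * (2*r)^2 := by simp [Finset.sum_const, Finset.card_univ]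

/-- Any Whitney cube `Q` meeting the segment `[x, x_P)` has diameter comparable to the
distance from the meeting point to `x_P`: `10 δ_Q ≤ |x' − x_P| ≤ 131 δ_Q`. -/
theorem stmt11 {n : ℕ} (hn : 0 < n) (D : Set (En n)) (hne : D.Nonempty) (hcl : IsClosed D)
    (P Q : Set (En n)) (hP : IsCube P) (hQ : IsCube Q)
    (hP1 : 10 * diam P ≤ setDist P D) (hP2 : setDist P D ≤ 22 * diam P)
    (hQ1 : 10 * diam Q ≤ setDist Q D) (hQ2 : setDist Q D ≤ 22 * diam Q)
    (xP : En n) (hxP : xP ∈ D) (cP : En n) (hcP : cP ∈ P)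
    (hd : dist xP cP = setDist P D)
    (x : En n) (hx : dist x cP ≤ (7/10) * setDist P D)
    (x' : En n) (hx'Q : x' ∈ Q)
    (hx'seg : ∃ t ∈ Set.Ico (0:ℝ) 1, x' = (1 - t) • x + t • xP) :
    10 * diam Q ≤ dist x' xP ∧ dist x' xP ≤ 131 * diam Q := by
  obtain ⟨t, ⟨ht0, ht1⟩, hx'⟩ := hx'seg
  set d : ℝ := setDist P D with hdef
  have hd0 : 0 ≤ d := hd ▸ dist_nonneg
  have hbddQ : BddBelow (Set.image2 dist Q D) := by
    refine ⟨0, fun z hz => ?_⟩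
    obtain ⟨a, _, b, _, rfl⟩ := hz
    exact dist_nonneg
  have hbddP : BddBelow (Set.image2 dist P D) := by
    refine ⟨0, fun z hz => ?_⟩
    obtain ⟨a, _, b, _, rfl⟩ := hz
    exact dist_nonneg
  -- lower bound
  have h1 : setDist Q D ≤ dist x' xP :=
    csInf_le hbddQ (Set.mem_image2_of_mem hx'Q hxP)
  refine ⟨le_trans hQ1 h1, ?_⟩
  -- |x' - cP| ≤ (7+3t)/10 * d
  have hxPcP : dist xP cP = d := hd
  have hxc : dist x' cP ≤ (7 + 3*t)/10 * d := by
    have hrw : x' - cP = (1 - t) • (x - cP) + t • (xP - cP) := by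
      rw [hx']; module
    rw [dist_eq_norm, hrw]
    calc ‖(1 - t) • (x - cP) + t • (xP - cP)‖
        ≤ ‖(1 - t) • (x - cP)‖ + ‖t • (xP - cP)‖ := norm_add_le _ _
      _ = (1 - t) * ‖x - cP‖ + t * ‖xP - cP‖ := by
          rw [norm_smul, norm_smul, Real.norm_eq_abs, Real.norm_eq_abs,
            abs_of_nonneg (by linarith), abs_of_nonneg ht0]
      _ ≤ (1 - t) * ((7/10) * d) + t * d := by
          have h2 : ‖x - cP‖ ≤ (7/10) * d := by rw [← dist_eq_norm]; exact hx
          have h3 : ‖xP - cP‖ = d := by rw [← dist_eq_norm]; exact hxPcP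
          have ht1' : (0:ℝ) ≤ 1 - t := by linarith
          nlinarith
      _ = (7 + 3*t)/10 * d := by ring
  -- each point of D is far from x'
  have hfar : ∀ y ∈ D, 3 * (1 - t) / 10 * d ≤ dist x' y := by
    intro y hy
    have hdy : d ≤ dist cP y := csInf_le hbddP (Set.mem_image2_of_mem hcP hy)
    have := dist_triangle cP x' y
    have h' : dist cP x' = dist x' cP := dist_comm _ _
    linarith
  -- hence 3(1-t)/10 * d ≤ 23 δ_Q
  have hQbd : Bornology.IsBounded Q := isCube_bounded hQ
  have hQne : (Set.image2 dist Q D).Nonempty :=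
    ⟨dist x' xP, Set.mem_image2_of_mem hx'Q hxP⟩
  have hkey : 3 * (1 - t) / 10 * d ≤ 23 * diam Q := by
    apply le_of_forall_pos_le_add
    intro ε hε
    obtain ⟨r, hr, hrlt⟩ := Real.lt_sInf_add_pos hQne hε
    obtain ⟨q, hq, y, hy, rfl⟩ := hr
    have h5 : dist x' q ≤ diam Q := dist_le_diam_of_mem hQbd hx'Q hq
    have h6 := dist_triangle x' q y
    have h7 := hfar y hy
    have : setDist Q D = sInf (Set.image2 dist Q D) := rfl
    linarith
  -- final computation
  have hdiamQ : 0 ≤ diam Q := diam_nonneg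
  have hrw2 : x' - xP = (1 - t) • (x - xP) := by rw [hx']; module
  have hval : dist x' xP = (1 - t) * dist x xP := by
    rw [dist_eq_norm, hrw2, norm_smul, Real.norm_eq_abs,
      abs_of_nonneg (by linarith : (0:ℝ) ≤ 1 - t), dist_eq_norm]
  have hxxP : dist x xP ≤ (17/10) * d := by
    have := dist_triangle x cP xP
    have h8 : dist cP xP = d := by rw [dist_comm]; exact hxPcP
    linarith
  have h9 : dist x' xP ≤ (1 - t) * ((17/10) * d) := by
    rw [hval]
    have ht1' : (0:ℝ) ≤ 1 - t := by linarith
    exact mul_le_mul_of_nonneg_left hxxP ht1'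
  nlinarith [hkey, h9, hdiamQ]
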